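/- Let h, τ, τ' be naturals with τ' < τ ≤ h/2 and suppose k ≥ 1. If binom(h,τ) elements are each assigned one of binom(h,τ') 'rung-position patterns', and h = τ(k^(τ-1) + τ), then some pattern is assigned to at least k^(τ-1) + 1 elements. -/

import Mathlib

theorem Nat.choose_le_choose_of_le_half {n r s : ℕ} (hrs : r ≤ s) (hs : s ≤ n / 2) :
    n.choose r ≤ n.choose s := by
  induction s, hrs using Nat.le_induction with
  | base => rfl
  | succ s _ ih => exact (ih (by omega)).trans (Nat.choose_le_succ_of_lt_half_left (by omega))

theorem Nat.choose_mul_le_choose_succ {n r s m : ℕ} (hrs : r ≤ s) (hs : 2 * (s + 1) ≤ n)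
    (hm : m * (s + 1) ≤ n - s) : n.choose r * m ≤ n.choose (s + 1) := by
  have hmono : n.choose r ≤ n.choose s := Nat.choose_le_choose_of_le_half hrs (by omega)
  refine Nat.le_of_mul_le_mul_right ?_ s.succ_pos
  calc n.choose r * m * (s + 1) = n.choose r * (m * (s + 1)) := Nat.mul_assoc _ _ _
    _ ≤ n.choose s * (n - s) := Nat.mul_le_mul hmono hm
    _ = n.choose (s + 1) * (s + 1) := (Nat.choose_succ_right_eq n s).symm

theorem pigeonhole_rung_patterns_general (h τ τ' k : ℕ)
    (hττ' : τ' < τ) (hτh : 2 * τ ≤ h)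
    (hh : h = τ * (k ^ (τ - 1) + τ))
    (f : Fin (Nat.choose h τ) → Fin (Nat.choose h τ')) :
    ∃ p : Fin (Nat.choose h τ'),
      k ^ (τ - 1) + 1 ≤ (Finset.univ.filter (fun x => f x = p)).card := by
  obtain ⟨σ, rfl⟩ : ∃ σ, τ = σ + 1 := ⟨τ - 1, by omega⟩
  simp only [Nat.add_sub_cancel] at hh ⊢
  have hbound : h.choose τ' * (k ^ σ + 1) ≤ h.choose (σ + 1) := by
    refine Nat.choose_mul_le_choose_succ (by omega) hτh (Nat.le_sub_of_add_le ?_)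
    -- `h - σ = (σ + 1) * (k ^ σ + 1) + σ ^ 2`
    rw [hh]
    nlinarith
  have : Nonempty (Fin (h.choose τ')) := ⟨⟨0, Nat.choose_pos (by omega)⟩⟩
  exact Fintype.exists_le_card_fiber_of_mul_le_card f (by simpa using hbound)

/-- Pigeonhole with the binomial bounds: if binom(h,τ) elements are each
    assigned one of binom(h,τ') patterns, τ' < τ ≤ h/2, k ≥ 1, and
    h = τ(k^(τ-1)+τ), then some pattern receives at least k^(τ-1)+1 elements. -/
theorem pigeonhole_rung_patterns (h τ τ' k : ℕ) (hk : 1 ≤ k)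
    (hττ' : τ' < τ) (hτh : 2 * τ ≤ h)
    (hh : h = τ * (k ^ (τ - 1) + τ))
    (f : Fin (Nat.choose h τ) → Fin (Nat.choose h τ')) :
    ∃ p : Fin (Nat.choose h τ'),
      k ^ (τ - 1) + 1 ≤ (Finset.univ.filter (fun x => f x = p)).card :=
  pigeonhole_rung_patterns_general h τ τ' k hττ' hτh hh f
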